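/- Let K be a finite field and let x ∈ K with x ≠ 0. Then the x-monomial minimal solution over K is irreducible. -/

import Mathlib

namespace Quiddity

variable {A : Type*} [CommRing A]

/-- `mMat [a₁, …, aₙ]` is the matrix product `[[aₙ,-1],[1,0]] ⋯ [[a₁,-1],[1,0]]`. -/
def mMat : List A → Matrix (Fin 2) (Fin 2) A
  | [] => 1
  | a :: t => mMat t * !![a, -1; 1, 0]

/-- Continuant: `cont [] = K₀ = 1`, `cont [a] = K₁(a) = a`, and the continuant recursion. -/
def cont : List A → A
  | [] => 1
  | [a] => a
  | a :: b :: t => a * cont (b :: t) - cont t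

/-- A λ-quiddity is a tuple with `Mₙ(a₁,…,aₙ) = ± Id`. -/
def IsQuiddity (l : List A) : Prop := mMat l = 1 ∨ mMat l = -1

/-- The sum `⊕` of two tuples (meaningful for tuples of length ≥ 2):
`(a₁,…,aₘ) ⊕ (b₁,…,b_l) = (a₁+b_l, a₂,…,a_{m−1}, aₘ+b₁, b₂,…,b_{l−1})`. -/
def oplus (la lb : List A) : List A :=
  (la.headD 0 + lb.getLastD 0) ::
    (la.tail.dropLast ++ (la.getLastD 0 + lb.headD 0) :: lb.tail.dropLast)

/-- Two tuples are equivalent if one is a cyclic permutation of the other or of its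
reversal. -/
def TupleEquiv (l l' : List A) : Prop :=
  List.IsRotated l l' ∨ List.IsRotated l.reverse l'

/-- A λ-quiddity `c` is reducible if `c ∼ a ⊕ b` with `b` a λ-quiddity and both of size ≥ 3. -/
def QuiddityReducible (c : List A) : Prop :=
  ∃ a b : List A, 3 ≤ a.length ∧ 3 ≤ b.length ∧ IsQuiddity b ∧ TupleEquiv c (oplus a b)

/-- `(a, b, a, b, …, a, b)` with `k` repetitions of the pair `(a, b)` (size `2k`). -/
def dynList : ℕ → A → A → List A
  | 0, _, _ => []
  | k + 1, a, b => a :: b :: dynList k a b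

/-- `(u, v, v, u, v, v, …, u, v, v)` with `k` repetitions of the block `(u, v, v)`
(size `3k`). -/
def triList : ℕ → A → A → List A
  | 0, _, _ => []
  | k + 1, a, b => a :: b :: b :: triList k a b

end Quiddity

open Quiddity

/-! If `(x, …, x) ∼ a ⊕ b` with `b` a λ-quiddity, then `b = (r, x, …, x, s)` with `j ≥ 1` inner
entries and `j + 3 ≤ n`. Writing `R(t) = [[t, -1], [1, 0]]`, the condition `M(b) = ±Id` says
`R(r) R(s) = ±R(x)⁻ʲ`, so `R(r) R(s)` commutes with `R(x)`; comparing entries gives `r = s` and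
`r (r - x) = 0`. If `r = s = 0`, then `R(0)² = -Id` makes `(x, …, x)` of size `j` a λ-quiddity;
if `r = s = x`, then `b` itself is `(x, …, x)` of size `j + 2`. Both contradict the minimality
of `n`. -/

section
variable {R : Type*} [Ring R] [IsDedekindFiniteMonoid R]

lemma mul_eq_one_or_neg_one_comm {a b : R} (h : a * b = 1 ∨ a * b = -1) :
    b * a = 1 ∨ b * a = -1 := by
  rcases h with h | h
  · exact .inl (mul_eq_one_comm.mp h)
  · refine .inr (neg_eq_iff_eq_neg.mp ?_)
    rw [← neg_mul, mul_eq_one_comm, mul_neg, h, neg_neg]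

lemma commute_of_mul_eq_one_or_neg_one {a b c : R} (hab : a * b = 1 ∨ a * b = -1)
    (hbc : Commute b c) : Commute a c := by
  obtain ⟨d, had, hdc⟩ : ∃ d : R, a * d = 1 ∧ Commute d c := by
    rcases hab with h | h
    · exact ⟨b, h, hbc⟩
    · exact ⟨-b, by rw [mul_neg, h, neg_neg], hbc.neg_left⟩
  exact (hdc.symm.units_inv_right (u := ⟨d, a, mul_eq_one_comm.mp had, had⟩)).symm

end

namespace Quiddity

lemma TupleEquiv.eq_replicate {A : Type*} {l : List A} {x : A} {n : ℕ}
    (h : TupleEquiv (List.replicate n x) l) : l = List.replicate n x := by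
  rcases h with ⟨k, rfl⟩ | ⟨k, rfl⟩ <;> simp [List.rotate_replicate]

variable {A : Type*} [CommRing A]

lemma exists_of_oplus_eq_replicate {a b : List A} {x : A} {n : ℕ} (ha : 3 ≤ a.length)
    (hb : 3 ≤ b.length) (h : oplus a b = List.replicate n x) :
    ∃ r s j, b = r :: (List.replicate j x ++ [s]) ∧ 0 < j ∧ j + 2 < n := by
  obtain ⟨r, m, s, rfl⟩ : ∃ r m s, b = r :: (m ++ [s]) := by
    match b, hb with
    | r :: t, hb =>
      obtain ⟨m, s, rfl⟩ := (List.eq_nil_or_concat t).resolve_left (by rintro rfl; simp at hb)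
      exact ⟨r, m, s, by rw [List.concat_eq_append]⟩
  have hall : ∀ y ∈ oplus a (r :: (m ++ [s])), y = x := fun y hy =>
    List.eq_of_mem_replicate (h ▸ hy)
  have hm : m = List.replicate m.length x :=
    List.eq_replicate_of_mem fun y hy => hall y (by simp [oplus, hy])
  have hlen := congrArg List.length h
  simp only [oplus, List.tail_cons, List.dropLast_concat, List.length_cons, List.length_append,
    List.length_dropLast, List.length_tail, List.length_replicate, List.length_nil] at hlen hb
  exact ⟨r, s, m.length, hm ▸ rfl, by omega, by omega⟩

def elemMat (a : A) : Matrix (Fin 2) (Fin 2) A := !![a, -1; 1, 0]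

lemma mMat_cons (a : A) (t : List A) : mMat (a :: t) = mMat t * elemMat a := rfl

@[simp]
lemma mMat_nil : mMat ([] : List A) = 1 := rfl

lemma mMat_append (u v : List A) : mMat (u ++ v) = mMat v * mMat u := by
  induction u with
  | nil => simp
  | cons a t ih => rw [List.cons_append, mMat_cons, mMat_cons, ih, Matrix.mul_assoc]

lemma mMat_replicate (x : A) (k : ℕ) : mMat (List.replicate k x) = elemMat x ^ k := by
  induction k with
  | zero => rfl
  | succ k ih => rw [List.replicate_succ, mMat_cons, ih, pow_succ]

lemma IsQuiddity.rotate_one {a : A} {t : List A} (h : IsQuiddity (a :: t)) :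
    IsQuiddity (t ++ [a]) := by
  rw [IsQuiddity, mMat_append, mMat_cons, mMat_nil, one_mul]
  exact mul_eq_one_or_neg_one_comm h

lemma IsQuiddity.elemMat_mul_elemMat_mul_mMat {r s : A} {l : List A}
    (h : IsQuiddity (r :: (l ++ [s]))) :
    elemMat r * elemMat s * mMat l = 1 ∨ elemMat r * elemMat s * mMat l = -1 := by
  simpa only [IsQuiddity, mMat_append, mMat_cons, mMat_nil, one_mul, mul_assoc] using
    h.rotate_one

lemma elemMat_zero_mul_self : elemMat (0 : A) * elemMat 0 = -1 := by
  ext i j; fin_cases i <;> fin_cases j <;> simp [elemMat]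

lemma IsQuiddity.of_cons_zero_append_zero {l : List A} (h : IsQuiddity (0 :: (l ++ [0]))) :
    IsQuiddity l := by
  have := h.elemMat_mul_elemMat_mul_mMat
  rw [elemMat_zero_mul_self, neg_one_mul, neg_eq_iff_eq_neg, neg_eq_iff_eq_neg, neg_neg] at this
  exact this.symm

lemma eq_of_commute_elemMat_mul_elemMat {r s x : A}
    (h : Commute (elemMat r * elemMat s) (elemMat x)) : r = s ∧ s * x = r * s := by
  have h10 : s * x - 1 = r * s - 1 := by
    simpa [elemMat, Matrix.mul_apply, Fin.sum_univ_two, sub_eq_add_neg] using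
      congrFun (congrFun h.eq 1) 0
  have h11 : -s = -r := by
    simpa [elemMat, Matrix.mul_apply, Fin.sum_univ_two] using congrFun (congrFun h.eq 1) 1
  exact ⟨(neg_inj.mp h11).symm, by linear_combination h10⟩

lemma IsQuiddity.ends_eq_of_replicate [IsDomain A] {r s x : A} {j : ℕ}
    (h : IsQuiddity (r :: (List.replicate j x ++ [s]))) : r = s ∧ (r = 0 ∨ r = x) := by
  have hN := h.elemMat_mul_elemMat_mul_mMat
  rw [mMat_replicate] at hN
  obtain ⟨rfl, hr⟩ := eq_of_commute_elemMat_mul_elemMat <|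
    commute_of_mul_eq_one_or_neg_one hN (Commute.self_pow _ j).symm
  have : r * (r - x) = 0 := by linear_combination -hr
  exact ⟨rfl, (mul_eq_zero.mp this).imp_right sub_eq_zero.mp⟩

end Quiddity

theorem stmt6_general (K : Type*) [Field K] (x : K)
    (n : ℕ)
    (hmin : ∀ k, 0 < k → IsQuiddity (List.replicate k x) → n ≤ k) :
    ¬ QuiddityReducible (List.replicate n x) := by
  rintro ⟨a, b, ha, hb, hqb, hequiv⟩
  obtain ⟨r, s, j, rfl, hj, hjn⟩ := exists_of_oplus_eq_replicate ha hb hequiv.eq_replicate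
  obtain ⟨rfl, rfl | hr⟩ := hqb.ends_eq_of_replicate
  · exact absurd (hmin j hj hqb.of_cons_zero_append_zero) (by omega)
  · rw [hr] at hqb
    have hqj : IsQuiddity (List.replicate (j + 2) x) := by
      rwa [List.replicate_succ, List.replicate_succ']
    exact absurd (hmin (j + 2) (by omega) hqj) (by omega)

/-- over a finite field, the `x`-monomial minimal solution is irreducible
for every `x ≠ 0`. -/
theorem stmt6 (K : Type*) [Field K] [Fintype K] (x : K) (hx : x ≠ 0)
    (n : ℕ) (hn : 0 < n)
    (hq : IsQuiddity (List.replicate n x))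
    (hmin : ∀ k, 0 < k → IsQuiddity (List.replicate k x) → n ≤ k) :
    ¬ QuiddityReducible (List.replicate n x) :=
  stmt6_general K x n hmin
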